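/- Let ℳ be a von Neumann algebra on a complex Hilbert space H and let (𝓘, ‖·‖_𝓘) be a symmetrically normed Banach ideal of ℳ with property (M) (the Minkowski integral inequality property). Then 𝓘 is integral symmetrically normed: for every measure space (Σ, ℋ, ρ) and weak* measurable A, B : Σ → ℳ with A(·)cB(·) weak* measurable for all c ∈ ℳ and ⨍_Σ ‖A‖‖B‖ dρ < ∞, one has ∫_Σ A(σ) r B(σ) ρ(dσ) ∈ 𝓘 and ‖∫_Σ A(σ) r B(σ) ρ(dσ)‖_𝓘 ≤ ‖r‖_𝓘 ⨍_Σ ‖A‖‖B‖ dρ for all r ∈ 𝓘. -/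

import Mathlib

open MeasureTheory ENNReal
open scoped InnerProductSpace

/-! Apply property (M) to `σ ↦ A σ * r * B σ`. The symmetric norm bounds its `𝓘`-norm pointwise
by `‖r‖_𝓘 ‖A σ‖ ‖B σ‖`, and the lower integral, which is just `lintegral` (already a lower integral
for nonmeasurable functions), is monotone and commutes with finite scalars. -/

/-- The lower integral of a (possibly nonmeasurable) function `h : α → ℝ≥0∞`. -/
noncomputable def lowerIntegral {α : Type*} [MeasurableSpace α] (ρ : Measure α)
    (h : α → ℝ≥0∞) : ℝ≥0∞ :=
  ⨆ (g : α → ℝ≥0∞) (_ : Measurable g) (_ : ∀ᵐ x ∂ρ, g x ≤ h x), ∫⁻ x, g x ∂ρ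

/-- `J` is the weak* integral of `F` with respect to `ρ`. -/
def IsWeakStarIntegral {H : Type*} [NormedAddCommGroup H] [InnerProductSpace ℂ H]
    [CompleteSpace H] {α : Type*} [MeasurableSpace α] (ρ : Measure α)
    (F : α → H →L[ℂ] H) (J : H →L[ℂ] H) : Prop :=
  ∀ h k : ℕ → H, Summable (fun n => ‖h n‖ ^ 2) → Summable (fun n => ‖k n‖ ^ 2) →
    ∑' n, ⟪J (h n), k n⟫_ℂ = ∫ σ, (∑' n, ⟪F σ (h n), k n⟫_ℂ) ∂ρ

theorem lowerIntegral_eq_lintegral {α : Type*} [MeasurableSpace α] (ρ : Measure α)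
    (h : α → ℝ≥0∞) : lowerIntegral ρ h = ∫⁻ x, h x ∂ρ := by
  refine le_antisymm (iSup₂_le fun g _ => iSup_le fun hgh => lintegral_mono_ae hgh) ?_
  obtain ⟨g, hg, hgh, hint⟩ := exists_measurable_le_lintegral_eq ρ h
  rw [hint]
  exact le_iSup₂_of_le g hg (le_iSup_of_le (.of_forall hgh) le_rfl)

theorem lowerIntegral_le_const_mul {α : Type*} [MeasurableSpace α] (ρ : Measure α)
    {h h' : α → ℝ≥0∞} {c : ℝ≥0∞} (hc : c ≠ ∞) (hle : ∀ x, h x ≤ c * h' x) :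
    lowerIntegral ρ h ≤ c * lowerIntegral ρ h' := by
  simp only [lowerIntegral_eq_lintegral, ← lintegral_const_mul' c h' hc]
  exact lintegral_mono hle

theorem ofReal_le_ofReal_mul_nnnorm_mul_nnnorm {E F : Type*} [SeminormedAddCommGroup E]
    [SeminormedAddCommGroup F] {x y : ℝ} (a : E) (b : F) (hxy : x ≤ ‖a‖ * y * ‖b‖) :
    ENNReal.ofReal x ≤ ENNReal.ofReal y * ((‖a‖₊ : ℝ≥0∞) * (‖b‖₊ : ℝ≥0∞)) := by
  calc ENNReal.ofReal x ≤ ENNReal.ofReal (y * (‖a‖ * ‖b‖)) :=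
        ENNReal.ofReal_le_ofReal (by linarith)
    _ = ENNReal.ofReal y * ((‖a‖₊ : ℝ≥0∞) * (‖b‖₊ : ℝ≥0∞)) := by
        rw [ENNReal.ofReal_mul' (by positivity), ENNReal.ofReal_mul (norm_nonneg _),
          ofReal_norm, ofReal_norm, enorm_eq_nnnorm, enorm_eq_nnnorm]

theorem stmt7_general {H : Type*} [NormedAddCommGroup H] [InnerProductSpace ℂ H] [CompleteSpace H]
    (M : VonNeumannAlgebra H) (I : Set (H →L[ℂ] H)) (nI : (H →L[ℂ] H) → ℝ)
    -- `I` is a (two-sided, `M`-module) ideal of `M`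
    (hIM : I ⊆ (M : Set (H →L[ℂ] H)))
    (hIdeal : ∀ a b r : H →L[ℂ] H, a ∈ M → b ∈ M → r ∈ I → a * r * b ∈ I)
    -- `I` is symmetrically normed
    (hsymm : ∀ a b r : H →L[ℂ] H, a ∈ M → b ∈ M → r ∈ I →
      nI (a * r * b) ≤ ‖a‖ * nI r * ‖b‖)
    -- property (M): the Minkowski integral inequality property
    (hPropM : ∀ (Ω : Type) (_ : MeasurableSpace Ω) (ρ : Measure Ω)
      (F : Ω → H →L[ℂ] H), (∀ σ, F σ ∈ I) →
      (∀ h k : H, Measurable fun σ => ⟪F σ h, k⟫_ℂ) →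
      lowerIntegral ρ (fun σ => ENNReal.ofReal (nI (F σ))) < ∞ →
      ∀ J : H →L[ℂ] H, IsWeakStarIntegral ρ F J →
        J ∈ I ∧ ENNReal.ofReal (nI J) ≤
          lowerIntegral ρ (fun σ => ENNReal.ofReal (nI (F σ)))) :
    -- conclusion: `I` is integral symmetrically normed
    ∀ (Ω : Type) (_ : MeasurableSpace Ω) (ρ : Measure Ω) (A B : Ω → H →L[ℂ] H),
      (∀ σ, A σ ∈ M) → (∀ σ, B σ ∈ M) →
      (∀ h k : H, Measurable fun σ => ⟪A σ h, k⟫_ℂ) →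
      (∀ h k : H, Measurable fun σ => ⟪B σ h, k⟫_ℂ) →
      (∀ c : H →L[ℂ] H, c ∈ M →
        ∀ h k : H, Measurable fun σ => ⟪(A σ * c * B σ) h, k⟫_ℂ) →
      lowerIntegral ρ (fun σ => (‖A σ‖₊ : ℝ≥0∞) * (‖B σ‖₊ : ℝ≥0∞)) < ∞ →
      ∀ r ∈ I, ∀ J : H →L[ℂ] H, IsWeakStarIntegral ρ (fun σ => A σ * r * B σ) J →
        J ∈ I ∧ ENNReal.ofReal (nI J) ≤ ENNReal.ofReal (nI r) *
          lowerIntegral ρ (fun σ => (‖A σ‖₊ : ℝ≥0∞) * (‖B σ‖₊ : ℝ≥0∞)) := by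
  intro Ω _ ρ A B hAM hBM _ _ hABmeas hfin r hr J hJ
  have hbound : lowerIntegral ρ (fun σ => ENNReal.ofReal (nI (A σ * r * B σ))) ≤
      ENNReal.ofReal (nI r) * lowerIntegral ρ (fun σ => (‖A σ‖₊ : ℝ≥0∞) * (‖B σ‖₊ : ℝ≥0∞)) :=
    lowerIntegral_le_const_mul ρ ENNReal.ofReal_ne_top fun σ =>
      ofReal_le_ofReal_mul_nnnorm_mul_nnnorm _ _ (hsymm _ _ _ (hAM σ) (hBM σ) hr)
  obtain ⟨hJI, hJn⟩ := hPropM Ω _ ρ _ (fun σ => hIdeal _ _ _ (hAM σ) (hBM σ) hr)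
    (hABmeas r (hIM hr)) (hbound.trans_lt (ENNReal.mul_lt_top ENNReal.ofReal_lt_top hfin)) J hJ
  exact ⟨hJI, hJn.trans hbound⟩

/-- A symmetrically normed Banach ideal of a von Neumann algebra with property (M)
(the Minkowski integral inequality property) is integral symmetrically normed. -/
theorem stmt7 {H : Type*} [NormedAddCommGroup H] [InnerProductSpace ℂ H] [CompleteSpace H]
    (M : VonNeumannAlgebra H) (I : Set (H →L[ℂ] H)) (nI : (H →L[ℂ] H) → ℝ)
    -- `I` is a (two-sided, `M`-module) ideal of `M`
    (hIM : I ⊆ (M : Set (H →L[ℂ] H)))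
    (hI0 : (0 : H →L[ℂ] H) ∈ I)
    (hIadd : ∀ r s : H →L[ℂ] H, r ∈ I → s ∈ I → r + s ∈ I)
    (hIsmul : ∀ (z : ℂ) (r : H →L[ℂ] H), r ∈ I → z • r ∈ I)
    (hIdeal : ∀ a b r : H →L[ℂ] H, a ∈ M → b ∈ M → r ∈ I → a * r * b ∈ I)
    -- `nI` is a norm on `I`
    (hn_def : ∀ r ∈ I, (nI r = 0 ↔ r = 0))
    (hn_add : ∀ r s : H →L[ℂ] H, r ∈ I → s ∈ I → nI (r + s) ≤ nI r + nI s)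
    (hn_smul : ∀ (z : ℂ) (r : H →L[ℂ] H), r ∈ I → nI (z • r) = ‖z‖ * nI r)
    -- the inclusion `(I, nI) ↪ (M, ‖·‖)` is bounded
    (hn_bdd : ∃ C : ℝ, ∀ r ∈ I, ‖r‖ ≤ C * nI r)
    -- `(I, nI)` is complete
    (hcomplete : ∀ u : ℕ → (H →L[ℂ] H), (∀ n, u n ∈ I) →
      (∀ ε > (0 : ℝ), ∃ N, ∀ m ≥ N, ∀ n ≥ N, nI (u m - u n) < ε) →
      ∃ v ∈ I, ∀ ε > (0 : ℝ), ∃ N, ∀ n ≥ N, nI (u n - v) < ε)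
    -- `I` is symmetrically normed
    (hsymm : ∀ a b r : H →L[ℂ] H, a ∈ M → b ∈ M → r ∈ I →
      nI (a * r * b) ≤ ‖a‖ * nI r * ‖b‖)
    -- property (M): the Minkowski integral inequality property
    (hPropM : ∀ (Ω : Type) (_ : MeasurableSpace Ω) (ρ : Measure Ω)
      (F : Ω → H →L[ℂ] H), (∀ σ, F σ ∈ I) →
      (∀ h k : H, Measurable fun σ => ⟪F σ h, k⟫_ℂ) →
      lowerIntegral ρ (fun σ => ENNReal.ofReal (nI (F σ))) < ∞ →
      ∀ J : H →L[ℂ] H, IsWeakStarIntegral ρ F J →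
        J ∈ I ∧ ENNReal.ofReal (nI J) ≤
          lowerIntegral ρ (fun σ => ENNReal.ofReal (nI (F σ)))) :
    -- conclusion: `I` is integral symmetrically normed
    ∀ (Ω : Type) (_ : MeasurableSpace Ω) (ρ : Measure Ω) (A B : Ω → H →L[ℂ] H),
      (∀ σ, A σ ∈ M) → (∀ σ, B σ ∈ M) →
      (∀ h k : H, Measurable fun σ => ⟪A σ h, k⟫_ℂ) →
      (∀ h k : H, Measurable fun σ => ⟪B σ h, k⟫_ℂ) →
      (∀ c : H →L[ℂ] H, c ∈ M →
        ∀ h k : H, Measurable fun σ => ⟪(A σ * c * B σ) h, k⟫_ℂ) →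
      lowerIntegral ρ (fun σ => (‖A σ‖₊ : ℝ≥0∞) * (‖B σ‖₊ : ℝ≥0∞)) < ∞ →
      ∀ r ∈ I, ∀ J : H →L[ℂ] H, IsWeakStarIntegral ρ (fun σ => A σ * r * B σ) J →
        J ∈ I ∧ ENNReal.ofReal (nI J) ≤ ENNReal.ofReal (nI r) *
          lowerIntegral ρ (fun σ => (‖A σ‖₊ : ℝ≥0∞) * (‖B σ‖₊ : ℝ≥0∞)) :=
  stmt7_general M I nI hIM hIdeal hsymm hPropM
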